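/- The relation ⊑_F on terms of System F with pairs (least relation satisfying: ⋆ ⊑_F t for all t; t ⊑_F t; t ⊑_F (t,t); congruence under pairing, λ-abstraction, application, and projections; transitivity) is a partial order relation. -/
import Mathlib


open scoped NNReal

namespace LCA

/-! ## Types of λCA -/

mutual
inductive UTy : Type
  | var : ℕ → UTy
  | arrow : UTy → Ty → UTy
  | all : UTy → UTy
inductive Ty : Type
  | u : UTy → Ty
  | add : Ty → Ty → Ty
  | zero : Ty
end

mutual
def UTy.shift (d c : ℕ) : UTy → UTy
  | .var n => .var (if n < c then n else n + d)
  | .arrow U T => .arrow (U.shift d c) (T.shift d c)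
  | .all U => .all (U.shift d (c+1))
def Ty.shift (d c : ℕ) : Ty → Ty
  | .u U => .u (U.shift d c)
  | .add T R => .add (T.shift d c) (R.shift d c)
  | .zero => .zero
end

mutual
def UTy.subst (k : ℕ) (V : UTy) : UTy → UTy
  | .var n => if n = k then V else .var (if k < n then n - 1 else n)
  | .arrow U T => .arrow (UTy.subst k V U) (Ty.subst k V T)
  | .all U => .all (UTy.subst (k+1) (V.shift 1 0) U)
termination_by t => sizeOf t
def Ty.subst (k : ℕ) (V : UTy) : Ty → Ty
  | .u U => .u (UTy.subst k V U)
  | .add T R => .add (Ty.subst k V T) (Ty.subst k V R)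
  | .zero => .zero
termination_by t => sizeOf t
end

/- Type equivalence: least congruence with `T + 0̄ ≡ T`, commutativity and
associativity of `+`. -/
mutual
inductive UEq : UTy → UTy → Prop
  | refl : ∀ U, UEq U U
  | symm : ∀ {U V}, UEq U V → UEq V U
  | trans : ∀ {U V W}, UEq U V → UEq V W → UEq U W
  | arrow : ∀ {U V T S}, UEq U V → TyEq T S → UEq (.arrow U T) (.arrow V S)
  | all : ∀ {U V}, UEq U V → UEq (.all U) (.all V)
inductive TyEq : Ty → Ty → Prop
  | refl : ∀ T, TyEq T T
  | symm : ∀ {T R}, TyEq T R → TyEq R T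
  | trans : ∀ {T R S}, TyEq T R → TyEq R S → TyEq T S
  | u : ∀ {U V}, UEq U V → TyEq (.u U) (.u V)
  | addCong : ∀ {T T' R R'}, TyEq T T' → TyEq R R' → TyEq (.add T R) (.add T' R')
  | addZero : ∀ T, TyEq (.add T .zero) T
  | comm : ∀ T R, TyEq (.add T R) (.add R T)
  | assoc : ∀ T R S, TyEq (.add T (.add R S)) (.add (.add T R) S)
end

/-- `nTy n T` is the `n`-fold sum `T + ⋯ + T`, with `nTy 0 T = 0̄`. -/
def nTy : ℕ → Ty → Ty
  | 0, _ => .zero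
  | 1, T => T
  | n+2, T => .add T (nTy (n+1) T)

/-- The imprecision order `≼` on types (Table 4). -/
inductive Pce : Ty → Ty → Prop
  | wk : ∀ {m n : ℕ} (T : Ty), m ≤ n → Pce (nTy m T) (nTy n T)
  | ofEq : ∀ {T R}, TyEq T R → Pce T R
  | trans : ∀ {T S R}, Pce T S → Pce S R → Pce T R
  | addCong : ∀ {T₁ T₂ S₁ S₂}, Pce T₁ T₂ → Pce S₁ S₂ → Pce (.add T₁ S₁) (.add T₂ S₂)
  | arrow : ∀ {U₁ U₂ : UTy} {T₁ T₂ : Ty}, Pce (.u U₂) (.u U₁) → Pce T₁ T₂ →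
      Pce (.u (.arrow U₁ T₁)) (.u (.arrow U₂ T₂))
  | all : ∀ {U V : UTy}, Pce (.u U) (.u V) → Pce (.u (.all U)) (.u (.all V))

/-! ## Terms of λCA -/

inductive Tm : Type
  | var : ℕ → Tm
  | lam : UTy → Tm → Tm
  | tlam : Tm → Tm
  | app : Tm → Tm → Tm
  | tapp : Tm → UTy → Tm
  | zero : Tm
  | smul : ℝ≥0 → Tm → Tm
  | add : Tm → Tm → Tm

/-- Basis terms: variables, abstractions and type abstractions. -/
inductive IsBasis : Tm → Prop
  | var : ∀ n, IsBasis (.var n)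
  | lam : ∀ U t, IsBasis (.lam U t)
  | tlam : ∀ t, IsBasis (.tlam t)

def Tm.shift (d : ℕ) : ℕ → Tm → Tm
  | c, .var n => .var (if n < c then n else n + d)
  | c, .lam U t => .lam U (Tm.shift d (c+1) t)
  | c, .tlam t => .tlam (Tm.shift d c t)
  | c, .app t r => .app (Tm.shift d c t) (Tm.shift d c r)
  | c, .tapp t U => .tapp (Tm.shift d c t) U
  | _, .zero => .zero
  | c, .smul a t => .smul a (Tm.shift d c t)
  | c, .add t r => .add (Tm.shift d c t) (Tm.shift d c r)

def Tm.tshift (d : ℕ) : ℕ → Tm → Tm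
  | _, .var n => .var n
  | c, .lam U t => .lam (U.shift d c) (Tm.tshift d c t)
  | c, .tlam t => .tlam (Tm.tshift d (c+1) t)
  | c, .app t r => .app (Tm.tshift d c t) (Tm.tshift d c r)
  | c, .tapp t U => .tapp (Tm.tshift d c t) (U.shift d c)
  | _, .zero => .zero
  | c, .smul a t => .smul a (Tm.tshift d c t)
  | c, .add t r => .add (Tm.tshift d c t) (Tm.tshift d c r)

/-- Capture-avoiding substitution `t[s/x]` (de Bruijn). It acts linearly on
linear combinations. -/
def Tm.subst : ℕ → Tm → Tm → Tm
  | k, s, .var n => if n = k then s else .var (if k < n then n - 1 else n)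
  | k, s, .lam U t => .lam U (Tm.subst (k+1) (s.shift 1 0) t)
  | k, s, .tlam t => .tlam (Tm.subst k (s.tshift 1 0) t)
  | k, s, .app t r => .app (Tm.subst k s t) (Tm.subst k s r)
  | k, s, .tapp t U => .tapp (Tm.subst k s t) U
  | _, _, .zero => .zero
  | k, s, .smul a t => .smul a (Tm.subst k s t)
  | k, s, .add t r => .add (Tm.subst k s t) (Tm.subst k s r)

/-- Substitution `t[U/X]` of a unit type for a type variable in a term. -/
def Tm.tsubst : ℕ → UTy → Tm → Tm
  | _, _, .var n => .var n
  | k, V, .lam U t => .lam (UTy.subst k V U) (Tm.tsubst k V t)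
  | k, V, .tlam t => .tlam (Tm.tsubst (k+1) (V.shift 1 0) t)
  | k, V, .app t r => .app (Tm.tsubst k V t) (Tm.tsubst k V r)
  | k, V, .tapp t U => .tapp (Tm.tsubst k V t) (UTy.subst k V U)
  | _, _, .zero => .zero
  | k, V, .smul a t => .smul a (Tm.tsubst k V t)
  | k, V, .add t r => .add (Tm.tsubst k V t) (Tm.tsubst k V r)

/-! ## Typing -/

abbrev Ctx := List UTy

def sumTy : List Ty → Ty
  | [] => .zero
  | [T] => T
  | T :: Ts => .add T (sumTy Ts)

/-- Typing rules of λCA (Table 3). -/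
inductive HasTy : Ctx → Tm → Ty → Prop
  | var : ∀ {Γ : Ctx} {n U}, Γ[n]? = some U → HasTy Γ (.var n) (.u U)
  | zero : ∀ {Γ}, HasTy Γ .zero .zero
  | lam : ∀ {Γ U t T}, HasTy (U :: Γ) t T → HasTy Γ (.lam U t) (.u (.arrow U T))
  | app : ∀ {Γ t r U} {β : ℕ} {Ts : List Ty},
      HasTy Γ t (sumTy (Ts.map fun Ti => .u (.arrow U Ti))) →
      HasTy Γ r (nTy β (.u U)) →
      HasTy Γ (.app t r) (sumTy (Ts.map fun Ti => nTy β Ti))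
  | tlam : ∀ {Γ t U}, HasTy (Γ.map (UTy.shift 1 0)) t (.u U) →
      HasTy Γ (.tlam t) (.u (.all U))
  | tapp : ∀ {Γ t U V}, HasTy Γ t (.u (.all U)) →
      HasTy Γ (.tapp t V) (.u (UTy.subst 0 V U))
  | addI : ∀ {Γ t r T R}, HasTy Γ t T → HasTy Γ r R → HasTy Γ (.add t r) (.add T R)
  | smulI : ∀ {Γ t T} (a : ℝ≥0), HasTy Γ t T → HasTy Γ (.smul a t) (nTy ⌊a⌋₊ T)
  | eq : ∀ {Γ t T R}, HasTy Γ t T → TyEq T R → HasTy Γ t R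

/-! ## Reduction (Table 2), modulo AC of `+` -/

/-- AC-congruence on terms: commutativity and associativity of `+`. -/
inductive ACEq : Tm → Tm → Prop
  | refl : ∀ t, ACEq t t
  | symm : ∀ {t r}, ACEq t r → ACEq r t
  | trans : ∀ {t r s}, ACEq t r → ACEq r s → ACEq t s
  | comm : ∀ t r, ACEq (.add t r) (.add r t)
  | assoc : ∀ t r s, ACEq (.add t (.add r s)) (.add (.add t r) s)
  | addCong : ∀ {t t' r r'}, ACEq t t' → ACEq r r' → ACEq (.add t r) (.add t' r')
  | smulCong : ∀ {t t'} (a : ℝ≥0), ACEq t t' → ACEq (.smul a t) (.smul a t')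
  | appCong : ∀ {t t' r r'}, ACEq t t' → ACEq r r' → ACEq (.app t r) (.app t' r')
  | tappCong : ∀ {t t'} (U : UTy), ACEq t t' → ACEq (.tapp t U) (.tapp t' U)
  | lamCong : ∀ {t t'} (U : UTy), ACEq t t' → ACEq (.lam U t) (.lam U t')
  | tlamCong : ∀ {t t'}, ACEq t t' → ACEq (.tlam t) (.tlam t')

/-- One-step rewrite rules (Table 2), with contextual congruence. -/
inductive Step : Tm → Tm → Prop
  -- Group E
  | addZero : ∀ u, Step (.add u .zero) u
  | zeroSmul : ∀ u, Step (.smul 0 u) .zero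
  | oneSmul : ∀ u, Step (.smul 1 u) u
  | smulZero : ∀ a, Step (.smul a .zero) .zero
  | smulSmul : ∀ a b u, Step (.smul a (.smul b u)) (.smul (a*b) u)
  | smulAdd : ∀ a u v, Step (.smul a (.add u v)) (.add (.smul a u) (.smul a v))
  -- Group F
  | factor : ∀ a b u, Step (.add (.smul a u) (.smul b u)) (.smul (a+b) u)
  | factorOne : ∀ a u, Step (.add (.smul a u) u) (.smul (a+1) u)
  | factorBare : ∀ u, Step (.add u u) (.smul 2 u)
  -- Group A
  | appAddL : ∀ u v w, Step (.app (.add u v) w) (.add (.app u w) (.app v w))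
  | appAddR : ∀ u v w, Step (.app w (.add u v)) (.add (.app w u) (.app w v))
  | appSmulL : ∀ a u v, Step (.app (.smul a u) v) (.smul a (.app u v))
  | appSmulR : ∀ a u v, Step (.app v (.smul a u)) (.smul a (.app v u))
  | appZeroL : ∀ u, Step (.app .zero u) .zero
  | appZeroR : ∀ u, Step (.app u .zero) .zero
  -- β-reduction
  | beta : ∀ U t b, IsBasis b → Step (.app (.lam U t) b) (Tm.subst 0 b t)
  | tbeta : ∀ t U, Step (.tapp (.tlam t) U) (Tm.tsubst 0 U t)
  -- contextual congruence
  | addL : ∀ {t t'} (r), Step t t' → Step (.add t r) (.add t' r)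
  | smulC : ∀ {t t'} (a : ℝ≥0), Step t t' → Step (.smul a t) (.smul a t')
  | appL : ∀ {t t'} (r), Step t t' → Step (.app t r) (.app t' r)
  | appR : ∀ {r r'} (t), Step r r' → Step (.app t r) (.app t r')
  | tappC : ∀ {t t'} (U), Step t t' → Step (.tapp t U) (.tapp t' U)
  | lamC : ∀ {t t'} (U), Step t t' → Step (.lam U t) (.lam U t')
  | tlamC : ∀ {t t'}, Step t t' → Step (.tlam t) (.tlam t')

/-- One-step reduction, modulo AC of `+`. -/
def Red (t s : Tm) : Prop := ∃ t' s', ACEq t t' ∧ Step t' s' ∧ ACEq s' s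

def RedStar : Tm → Tm → Prop := Relation.ReflTransGen Red

/-- Strong normalisation: no infinite reduction sequence starts from `t`. -/
def SN (t : Tm) : Prop := Acc (fun a b => Red b a) t

/-! ## Values, neutral terms, reducibility candidates -/

def Tm.ClosedAt : ℕ → Tm → Prop
  | k, .var n => n < k
  | k, .lam _ t => Tm.ClosedAt (k+1) t
  | k, .tlam t => Tm.ClosedAt k t
  | k, .app t r => Tm.ClosedAt k t ∧ Tm.ClosedAt k r
  | k, .tapp t _ => Tm.ClosedAt k t
  | _, .zero => True
  | k, .smul _ t => Tm.ClosedAt k t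
  | k, .add t r => Tm.ClosedAt k t ∧ Tm.ClosedAt k r

def Tm.Closed (t : Tm) : Prop := Tm.ClosedAt 0 t

/-- The value grammar `v ::= λx:U.t | ΛX.t | v + v | α.v`. -/
inductive ValShape : Tm → Prop
  | lam : ∀ U t, ValShape (.lam U t)
  | tlam : ∀ t, ValShape (.tlam t)
  | add : ∀ {v w}, ValShape v → ValShape w → ValShape (.add v w)
  | smul : ∀ (a : ℝ≥0) {v}, ValShape v → ValShape (.smul a v)

def IsValue (t : Tm) : Prop := t.Closed ∧ ValShape t

/-- Neutral terms: closed terms that are not values. -/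
def Neutral (t : Tm) : Prop := t.Closed ∧ ¬ ValShape t

/-- Strongly normalising closed terms. -/
def SN0 : Set Tm := {t | t.Closed ∧ SN t}

/-- Reducibility candidates. -/
structure IsCand (A : Set Tm) : Prop where
  cr1 : A ⊆ SN0
  cr2 : ∀ ⦃t⦄, t ∈ A → ∀ ⦃t'⦄, RedStar t t' → t' ∈ A
  cr3 : ∀ ⦃t⦄, Neutral t → (∀ t', Red t t' → t' ∈ A) → t ∈ A

/-- Closure of `∅` under (CR3). -/
inductive EmptyClP : Tm → Prop
  | neu : ∀ {t}, Neutral t → (∀ t', Red t t' → EmptyClP t') → EmptyClP t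

def EmptyCl : Set Tm := {t | EmptyClP t}

/-- `A ⊕ B`: closure of `{α.t + β.r | t ∈ A, r ∈ B}` under (CR2) and (CR3). -/
inductive OplusClP (A B : Set Tm) : Tm → Prop
  | base : ∀ (a b : ℝ≥0) {t r}, t ∈ A → r ∈ B → OplusClP A B (.add (.smul a t) (.smul b r))
  | red : ∀ {t t'}, OplusClP A B t → RedStar t t' → OplusClP A B t'
  | neu : ∀ {t}, Neutral t → (∀ t', Red t t' → OplusClP A B t') → OplusClP A B t

def OplusCl (A B : Set Tm) : Set Tm := {t | OplusClP A B t}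

/-- `A → B`: closure under (CR3) of `{t | ∀ basis b ∈ A, t b ∈ B}`. -/
inductive ArrowClP (A B : Set Tm) : Tm → Prop
  | base : ∀ {t}, (∀ b, IsBasis b → b ∈ A → Tm.app t b ∈ B) → ArrowClP A B t
  | neu : ∀ {t}, Neutral t → (∀ t', Red t t' → ArrowClP A B t') → ArrowClP A B t

def ArrowCl (A B : Set Tm) : Set Tm := {t | ArrowClP A B t}

/-- `Λ A = {t | ∀ V, t@V ∈ A}`. -/
def LamSet (A : Set Tm) : Set Tm := {t | ∀ V : UTy, Tm.tapp t V ∈ A}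

def extRho (S : Set Tm) (ρ : ℕ → Set Tm) : ℕ → Set Tm
  | 0 => S
  | n+1 => ρ n

/- The reducibility model `⟦·⟧_ρ`. -/
mutual
def interpU (ρ : ℕ → Set Tm) : UTy → Set Tm
  | .var n => ρ n
  | .arrow U T => ArrowCl (interpU ρ U) (interpT ρ T)
  | .all U => ⋂ S ∈ {S : Set Tm | IsCand S}, LamSet (interpU (extRho S ρ) U)
termination_by t => sizeOf t
def interpT (ρ : ℕ → Set Tm) : Ty → Set Tm
  | .u U => interpU ρ U
  | .add T R => OplusCl (interpT ρ T) (interpT ρ R)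
  | .zero => EmptyCl
termination_by t => sizeOf t
end

/-! ## Parallel substitutions (for the adequacy statement) -/

def liftTySub (δ : ℕ → UTy) : ℕ → UTy
  | 0 => .var 0
  | n+1 => (δ n).shift 1 0

mutual
def UTy.substPar (δ : ℕ → UTy) : UTy → UTy
  | .var n => δ n
  | .arrow U T => .arrow (U.substPar δ) (T.substPar δ)
  | .all U => .all (U.substPar (liftTySub δ))
termination_by t => sizeOf t
def Ty.substPar (δ : ℕ → UTy) : Ty → Ty
  | .u U => .u (U.substPar δ)
  | .add T R => .add (T.substPar δ) (R.substPar δ)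
  | .zero => .zero
termination_by t => sizeOf t
end

def Tm.tsubstPar (δ : ℕ → UTy) : Tm → Tm
  | .var n => .var n
  | .lam U t => .lam (U.substPar δ) (Tm.tsubstPar δ t)
  | .tlam t => .tlam (Tm.tsubstPar (liftTySub δ) t)
  | .app t r => .app (Tm.tsubstPar δ t) (Tm.tsubstPar δ r)
  | .tapp t U => .tapp (Tm.tsubstPar δ t) (U.substPar δ)
  | .zero => .zero
  | .smul a t => .smul a (Tm.tsubstPar δ t)
  | .add t r => .add (Tm.tsubstPar δ t) (Tm.tsubstPar δ r)

def liftTmSub (σ : ℕ → Tm) : ℕ → Tm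
  | 0 => .var 0
  | n+1 => (σ n).shift 1 0

def Tm.substPar (σ : ℕ → Tm) : Tm → Tm
  | .var n => σ n
  | .lam U t => .lam U (Tm.substPar (liftTmSub σ) t)
  | .tlam t => .tlam (Tm.substPar (fun n => (σ n).tshift 1 0) t)
  | .app t r => .app (Tm.substPar σ t) (Tm.substPar σ r)
  | .tapp t U => .tapp (Tm.substPar σ t) U
  | .zero => .zero
  | .smul a t => .smul a (Tm.substPar σ t)
  | .add t r => .add (Tm.substPar σ t) (Tm.substPar σ r)

/-! ## The Additive calculus -/

inductive ATm : Type
  | var : ℕ → ATm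
  | lam : UTy → ATm → ATm
  | tlam : ATm → ATm
  | app : ATm → ATm → ATm
  | tapp : ATm → UTy → ATm
  | zero : ATm
  | add : ATm → ATm → ATm

/-- `nA n t` is the `n`-fold sum `t + ⋯ + t`, with `nA 0 t = 0`. -/
def nA : ℕ → ATm → ATm
  | 0, _ => .zero
  | 1, t => t
  | n+2, t => .add t (nA (n+1) t)

/-- The relation `⊑` on Additive terms. -/
inductive ASub : ATm → ATm → Prop
  | sum : ∀ {m n : ℕ} (t : ATm), m ≤ n → ASub (nA m t) (nA n t)
  | lam : ∀ {t t'} (U : UTy), ASub t t' → ASub (.lam U t) (.lam U t')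
  | tlam : ∀ {t t'}, ASub t t' → ASub (.tlam t) (.tlam t')
  | tapp : ∀ {t t'} (U : UTy), ASub t t' → ASub (.tapp t U) (.tapp t' U)
  | app : ∀ {t t' r r'}, ASub t t' → ASub r r' → ASub (.app t r) (.app t' r')
  | add : ∀ {t t' r r'}, ASub t t' → ASub r r' → ASub (.add t r) (.add t' r')
  | trans : ∀ {t r s}, ASub t r → ASub r s → ASub t s

/-- Typing rules of the Additive calculus: those of λCA without `sI`. -/
inductive AHasTy : Ctx → ATm → Ty → Prop
  | var : ∀ {Γ : Ctx} {n U}, Γ[n]? = some U → AHasTy Γ (.var n) (.u U)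
  | zero : ∀ {Γ}, AHasTy Γ .zero .zero
  | lam : ∀ {Γ U t T}, AHasTy (U :: Γ) t T → AHasTy Γ (.lam U t) (.u (.arrow U T))
  | app : ∀ {Γ t r U} {β : ℕ} {Ts : List Ty},
      AHasTy Γ t (sumTy (Ts.map fun Ti => .u (.arrow U Ti))) →
      AHasTy Γ r (nTy β (.u U)) →
      AHasTy Γ (.app t r) (sumTy (Ts.map fun Ti => nTy β Ti))
  | tlam : ∀ {Γ t U}, AHasTy (Γ.map (UTy.shift 1 0)) t (.u U) →
      AHasTy Γ (.tlam t) (.u (.all U))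
  | tapp : ∀ {Γ t U V}, AHasTy Γ t (.u (.all U)) →
      AHasTy Γ (.tapp t V) (.u (UTy.subst 0 V U))
  | addI : ∀ {Γ t r T R}, AHasTy Γ t T → AHasTy Γ r R → AHasTy Γ (.add t r) (.add T R)
  | eq : ∀ {Γ t T R}, AHasTy Γ t T → TyEq T R → AHasTy Γ t R

/-- The abstraction function `σ : λCA → Additive`. -/
noncomputable def absTm : Tm → ATm
  | .var n => .var n
  | .lam U t => .lam U (absTm t)
  | .tlam t => .tlam (absTm t)
  | .app t r => .app (absTm t) (absTm r)
  | .tapp t U => .tapp (absTm t) U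
  | .zero => .zero
  | .smul a t => nA ⌊a⌋₊ (absTm t)
  | .add t r => .add (absTm t) (absTm r)

end LCA

/-! ## System F with pairs -/

namespace Fp

inductive FTm : Type
  | var : ℕ → FTm
  | lam : FTm → FTm
  | app : FTm → FTm → FTm
  | star : FTm
  | pair : FTm → FTm → FTm
  | p1 : FTm → FTm
  | p2 : FTm → FTm

/-- The relation `⊑_F` on terms of System F with pairs. -/
inductive FSub : FTm → FTm → Prop
  | star : ∀ t, FSub .star t
  | refl : ∀ t, FSub t t
  | dup : ∀ t, FSub t (.pair t t)
  | pair : ∀ {t t' r r'}, FSub t t' → FSub r r' → FSub (.pair t r) (.pair t' r')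
  | app : ∀ {t t' r r'}, FSub t t' → FSub r r' → FSub (.app t r) (.app t' r')
  | lam : ∀ {t t'}, FSub t t' → FSub (.lam t) (.lam t')
  | p1 : ∀ {t t'}, FSub t t' → FSub (.p1 t) (.p1 t')
  | p2 : ∀ {t t'}, FSub t t' → FSub (.p2 t) (.p2 t')
  | trans : ∀ {t r s}, FSub t r → FSub r s → FSub t s

/-- A transitivity-free presentation of `⊑_F`. -/
inductive S : FTm → FTm → Prop
  | star : ∀ t, S .star t
  | var : ∀ n, S (.var n) (.var n)
  | lam : ∀ {t t'}, S t t' → S (.lam t) (.lam t')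
  | app : ∀ {t t' r r'}, S t t' → S r r' → S (.app t r) (.app t' r')
  | p1 : ∀ {t t'}, S t t' → S (.p1 t) (.p1 t')
  | p2 : ∀ {t t'}, S t t' → S (.p2 t) (.p2 t')
  | pair : ∀ {t t' r r'}, S t t' → S r r' → S (.pair t r) (.pair t' r')
  | dup : ∀ {t r1 r2}, S t r1 → S t r2 → S t (.pair r1 r2)

theorem S.refl : ∀ t, S t t := by
  intro t
  induction t with
  | var n => exact .var n
  | lam t ih => exact .lam ih
  | app t r iht ihr => exact .app iht ihr
  | star => exact .star _
  | pair t r iht ihr => exact .pair iht ihr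
  | p1 t ih => exact .p1 ih
  | p2 t ih => exact .p2 ih

theorem S.star_of (h : S t .star) : t = .star := by
  cases h <;> rfl

theorem S.trans {t r s : FTm} (h1 : S t r) (h2 : S r s) : S t s := by
  induction h2 generalizing t with
  | star s => rw [S.star_of h1]; exact .star s
  | var n => exact h1
  | lam _ ih => cases h1 with
    | star => exact .star _
    | lam h => exact .lam (ih h)
  | app _ _ ih1 ih2 => cases h1 with
    | star => exact .star _
    | app ha hb => exact .app (ih1 ha) (ih2 hb)
  | p1 _ ih => cases h1 with
    | star => exact .star _
    | p1 h => exact .p1 (ih h)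
  | p2 _ ih => cases h1 with
    | star => exact .star _
    | p2 h => exact .p2 (ih h)
  | pair _ _ ih1 ih2 => cases h1 with
    | star => exact .star _
    | pair ha hb => exact .pair (ih1 ha) (ih2 hb)
    | dup ha hb => exact .dup (ih1 ha) (ih2 hb)
  | dup _ _ ih1 ih2 => exact .dup (ih1 h1) (ih2 h1)

/-- Node-count size, with `⋆` of size 0. -/
def fsize : FTm → ℕ
  | .var _ => 1
  | .lam t => fsize t + 1
  | .app t r => fsize t + fsize r + 1
  | .star => 0
  | .pair t r => fsize t + fsize r + 1
  | .p1 t => fsize t + 1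
  | .p2 t => fsize t + 1

theorem S.size_le {t r : FTm} (h : S t r) : fsize t ≤ fsize r := by
  induction h <;> simp_all [fsize] <;> omega

theorem S.antisymm {t r : FTm} (h1 : S t r) (h2 : S r t) : t = r := by
  induction h1 with
  | star => rw [S.star_of h2]
  | var => rfl
  | lam _ ih => cases h2 with
    | lam h => rw [ih h]
  | app _ _ ih1 ih2 => cases h2 with
    | app ha hb => rw [ih1 ha, ih2 hb]
  | p1 _ ih => cases h2 with
    | p1 h => rw [ih h]
  | p2 _ ih => cases h2 with
    | p2 h => rw [ih h]
  | pair ha hb ih1 ih2 => cases h2 with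
    | pair hc hd => rw [ih1 hc, ih2 hd]
    | dup hc hd =>
        have := ha.size_le; have := hb.size_le; have := hc.size_le
        simp [fsize] at *; omega
  | dup ha hb ih1 ih2 =>
        have := ha.size_le; have := h2.size_le
        simp [fsize] at *; omega

theorem FSub_iff_S {t r : FTm} : FSub t r ↔ S t r := by
  constructor
  · intro h
    induction h with
    | star => exact .star _
    | refl => exact S.refl _
    | dup => exact .dup (S.refl _) (S.refl _)
    | pair _ _ ih1 ih2 => exact .pair ih1 ih2
    | app _ _ ih1 ih2 => exact .app ih1 ih2
    | lam _ ih => exact .lam ih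
    | p1 _ ih => exact .p1 ih
    | p2 _ ih => exact .p2 ih
    | trans _ _ ih1 ih2 => exact ih1.trans ih2
  · intro h
    induction h with
    | star => exact .star _
    | var => exact .refl _
    | lam _ ih => exact .lam ih
    | app _ _ ih1 ih2 => exact .app ih1 ih2
    | p1 _ ih => exact .p1 ih
    | p2 _ ih => exact .p2 ih
    | pair _ _ ih1 ih2 => exact .pair ih1 ih2
    | dup _ _ ih1 ih2 => exact (FSub.dup _).trans (.pair ih1 ih2)

end Fp
open Fp in
/-- `⊑_F` on terms of System F with pairs is a partial order. -/
theorem FSub_isPartialOrder :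
    (∀ t : FTm, FSub t t) ∧
    (∀ t r s : FTm, FSub t r → FSub r s → FSub t s) ∧
    (∀ t r : FTm, FSub t r → FSub r t → t = r) := by
  refine ⟨FSub.refl, fun t r s h1 h2 => h1.trans h2, fun t r h1 h2 => ?_⟩
  exact S.antisymm (FSub_iff_S.mp h1) (FSub_iff_S.mp h2)
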